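/- Let H^j_k ∈ ℂ for j ≥ 3 and k ∈ {−2, 0, 1, 2, 3, …}, and let p_j = z^j + H^j_{−2} z² + H^j_0 + ∑_{k≥1} H^j_k z^{−k} (j ≥ 3) be the Σ₃ family. Then the family {p_j}_{j≥3} is multiplicatively closed and z² p_j lies in its ℂ-linear span for every j ≥ 3 if and only if: H^j_k = 0 for all j ≥ 3 and k ≥ 1 (so every p_j is the polynomial z^j + H^j_{−2} z² + H^j_0); the recursions H^j_{−2} + H^{j−2}_{−2} H⁴_{−2} − H^{j−2}_0 = 0 and H^j_0 + H^{j−2}_{−2} H⁴_0 = 0 hold for all j ≥ 5; and the two associativity constraints H⁴₀ + 2H³₀H³₋₂ − (H³₋₂)² H⁴₋₂ − (H⁴₋₂)² = 0 and (H³₀)² − (H³₋₂)² H⁴₀ − H⁴₋₂ H⁴₀ = 0 hold. -/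

import Mathlib

/-!
Every element of the span `V` of the `p_j` is determined by its coefficients at `z^k`, `k ≥ 3`
(the coefficient of `z^k` in `p_j` is `δ_jk`), and none has a `z¹` term. Hence `z² p_j ∈ V`
forces `z² p_j = p_{j+2} + H^j_{-2} p_4`. Comparing coefficients gives `H^j_1 = 0` and the shift
rule `H^j_{m+2} = H^{j+2}_m + H^j_{-2} H^4_m`, while the missing `z¹` term of `p_i p_j ∈ V` makes
the tails antisymmetric, `H^j_{i-1} = -H^i_{j-1}`; together these kill every tail, and the
remaining coefficients give the recurrences. For polynomial `p_j`, `p_3² ∈ V` is then equivalent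
to the two quadratic constraints.

Conversely, the recurrences give `z² p_j = p_{j+2} + H^j_{-2} p_4`, so `V` is stable under `z²`,
hence under `p_4 = z⁴ + H⁴_{-2} z² + H⁴_0`, and `p_{j+2} = z² p_j - H^j_{-2} p_4` reduces every
product `p_i p_j` to `p_3²` and `p_4 p_3`.
-/

noncomputable section

/-- `z^j` viewed as a formal Laurent series in `t = z⁻¹` (so `z^j = t^(-j)`). -/
def zp (j : ℤ) : LaurentSeries ℂ := HahnSeries.single (-j) 1

/-- The `Σ₃` family `p_j = z^j + H^j_{-2} z² + H^j_0 + ∑_{k ≥ 1} H^j_k z^(-k)`, `j ≥ 3`. -/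
def sigma3 (H : ℕ → ℤ → ℂ) (j : ℕ) : LaurentSeries ℂ :=
  zp j + H j (-2) • zp 2
    + HahnSeries.ofPowerSeries ℤ ℂ (PowerSeries.mk fun k => H j (k:ℤ))

/-- The `Σ₃` family `{p_j}_{j ≥ 3}` as a set of Laurent series. -/
def sigma3Set (H : ℕ → ℤ → ℂ) : Set (LaurentSeries ℂ) := sigma3 H '' {j | 3 ≤ j}

theorem eq_zero_of_mem_span_of_biorthogonal {K M ι : Type*} [Semiring K] [AddCommMonoid M]
    [Module K M] (p : ι → M) (φ : ι → M →ₗ[K] K) {S : Set ι}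
    (hφ_self : ∀ k ∈ S, φ k (p k) = 1) (hφ_ne : ∀ i ∈ S, ∀ k ∈ S, i ≠ k → φ k (p i) = 0)
    {x : M} (hx : x ∈ Submodule.span K (p '' S)) (h : ∀ k ∈ S, φ k x = 0) : x = 0 := by
  obtain ⟨l, hl, rfl⟩ := (Finsupp.mem_span_image_iff_linearCombination K).1 hx
  suffices l = 0 by simp [this]
  ext k
  by_cases hk : k ∈ S
  · rw [Finsupp.coe_zero, Pi.zero_apply, ← h k hk, Finsupp.apply_linearCombination,
      Finsupp.linearCombination_apply, Finsupp.sum, Finset.sum_eq_single k]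
    · simp [hφ_self k hk]
    · intro i hi hik
      simp [hφ_ne i (hl hi) k hk hik]
    · intro hk'
      simp [Finsupp.notMem_support_iff.1 hk']
  · exact Finsupp.notMem_support_iff.1 fun h' => hk (hl h')

theorem mul_mem_span_of_forall_mul_mem {K A : Type*} [Semiring K] [Semiring A] [Module K A]
    [SMulCommClass K A A] {s : Set A} {w : A} (h : ∀ x ∈ s, w * x ∈ Submodule.span K s) :
    ∀ v ∈ Submodule.span K s, w * v ∈ Submodule.span K s := by
  intro v hv
  induction hv using Submodule.span_induction with
  | mem x hx => exact h x hx
  | zero => simp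
  | add x y _ _ hx hy => rw [mul_add]; exact add_mem hx hy
  | smul a x _ hx => rw [mul_smul_comm]; exact Submodule.smul_mem _ a hx

theorem mul_mem_of_recurrence {K A : Type*} [Ring K] [Ring A] [Module K A] [IsScalarTower K A A]
    {V : Submodule K A} {w q y : A} {p : ℕ → A} {c : ℕ → K} {n : ℕ}
    (hw : ∀ v ∈ V, w * v ∈ V) (hp : ∀ i ≥ n, p (i + 2) = w * p i - c i • q) (hq : q * y ∈ V)
    (h₀ : p n * y ∈ V) (h₁ : p (n + 1) * y ∈ V) : ∀ i ≥ n, p i * y ∈ V := by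
  suffices ∀ i ≥ n, p i * y ∈ V ∧ p (i + 1) * y ∈ V from fun i hi => (this i hi).1
  intro i hi
  induction i, hi using Nat.le_induction with
  | base => exact ⟨h₀, h₁⟩
  | succ i hi ih =>
    refine ⟨ih.2, ?_⟩
    rw [hp i hi, sub_mul, mul_assoc, smul_mul_assoc]
    exact sub_mem (hw _ ih.1) (V.smul_mem _ hq)

theorem tail_eq_zero_of_shift_of_antisymm {R : Type*} [Semiring R] [NoZeroDivisors R] [CharZero R]
    (t : ℕ → ℕ → R) (a : ℕ → R)
    (h_one : ∀ j ≥ 3, t j 1 = 0)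
    (h_shift : ∀ j ≥ 3, ∀ m ≥ 1, t j (m + 2) = t (j + 2) m + a j * t 4 m)
    (h_antisymm : ∀ i ≥ 3, ∀ j ≥ 3, t j (i - 1) + t i (j - 1) = 0) :
    ∀ j ≥ 3, ∀ k ≥ 1, t j k = 0 := by
  have h_odd (m : ℕ) : ∀ j ≥ 3, t j (2 * m + 1) = 0 := by
    induction m with
    | zero => exact h_one
    | succ m ih =>
      intro j hj
      rw [show 2 * (m + 1) + 1 = 2 * m + 1 + 2 by ring, h_shift j hj _ (by omega),
        ih (j + 2) (by omega), ih 4 (by norm_num), mul_zero, add_zero]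
  have h_four (k : ℕ) (hk : 1 ≤ k) : t 4 k = 0 := by
    obtain ⟨m, rfl | rfl⟩ := Nat.even_or_odd' k
    · simpa [h_odd 1 (2 * m + 1) (by omega)] using h_antisymm (2 * m + 1) (by omega) 4 (by norm_num)
    · exact h_odd m 4 (by norm_num)
  have h_even (m : ℕ) : ∀ j ≥ 3, t j (2 * m + 2) = t (j + 2 * m) 2 := by
    induction m with
    | zero => simp
    | succ m ih =>
      intro j hj
      rw [show 2 * (m + 1) + 2 = 2 * m + 2 + 2 by ring, h_shift j hj _ (by omega),
        h_four _ (by omega), mul_zero, add_zero, ih (j + 2) (by omega)]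
      ring_nf
  have h_two (j : ℕ) (hj : 3 ≤ j) : t j 2 = 0 := by
    have h := h_antisymm 3 le_rfl j hj
    obtain ⟨m, rfl | rfl⟩ := Nat.even_or_odd' j
    · rwa [show 2 * m - 1 = 2 * (m - 1) + 1 by omega, h_odd _ 3 le_rfl, add_zero] at h
    · rw [show 2 * m + 1 - 1 = 2 * (m - 1) + 2 by omega, h_even _ 3 le_rfl,
        show 3 + 2 * (m - 1) = 2 * m + 1 by omega, ← two_mul] at h
      exact (mul_eq_zero.1 h).resolve_left two_ne_zero
  intro j hj k hk
  obtain ⟨m, rfl | rfl⟩ := Nat.even_or_odd' k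
  · rw [show 2 * m = 2 * (m - 1) + 2 by omega, h_even _ j hj]
    exact h_two _ (by omega)
  · exact h_odd m j hj

-- Instance search reaches `HahnSeries.powerSeriesAlgebra` (through `ℂ → ℂ⟦X⟧`) first, whose
-- scalar action is not reducibly the coefficientwise one; hence these two instances, and the
-- explicit `zero_smul ℂ _` below, which `simp` cannot find on its own.
instance : IsScalarTower ℂ (LaurentSeries ℂ) (LaurentSeries ℂ) :=
  @IsScalarTower.right _ _ _ _ HahnSeries.instAlgebra

instance : SMulCommClass ℂ (LaurentSeries ℂ) (LaurentSeries ℂ) :=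
  @Algebra.to_smulCommClass _ _ _ _ HahnSeries.instAlgebra

theorem coeff_zp (j n : ℤ) : (zp j).coeff n = if n = -j then 1 else 0 := by
  rw [zp, HahnSeries.coeff_single]; congr

theorem zp_mul_zp (a b : ℤ) : zp a * zp b = zp (a + b) := by
  rw [zp, zp, zp, HahnSeries.single_mul_single, one_mul, neg_add]

theorem zp_zero : zp 0 = 1 := by
  rw [zp, neg_zero, HahnSeries.single_zero_one]

theorem coeff_zp_mul (m : ℤ) (x : LaurentSeries ℂ) (n : ℤ) :
    (zp m * x).coeff n = x.coeff (n + m) := by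
  simpa [zp] using HahnSeries.coeff_single_mul_add (r := (1 : ℂ)) (x := x) (a := n + m) (b := -m)

theorem coeff_sigma3 (H : ℕ → ℤ → ℂ) {j : ℕ} (hj : 3 ≤ j) (n : ℤ) :
    (sigma3 H j).coeff n =
      if n = -j then 1 else if n = -2 then H j (-2) else if n < 0 then 0 else H j n := by
  rw [sigma3, HahnSeries.coeff_add, HahnSeries.coeff_add, HahnSeries.coeff_smul, coeff_zp,
    coeff_zp, PowerSeries.coeff_coe, PowerSeries.coeff_mk]
  split_ifs <;> first | omega | simp_all [abs_of_nonneg]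

theorem coeff_sigma3_neg_self (H : ℕ → ℤ → ℂ) {j : ℕ} (hj : 3 ≤ j) :
    (sigma3 H j).coeff (-j) = 1 := by
  simp [coeff_sigma3 H hj]

theorem coeff_sigma3_neg_two (H : ℕ → ℤ → ℂ) {j : ℕ} (hj : 3 ≤ j) :
    (sigma3 H j).coeff (-2) = H j (-2) := by
  rw [coeff_sigma3 H hj, if_neg (by omega), if_pos rfl]

theorem coeff_sigma3_of_nonneg (H : ℕ → ℤ → ℂ) {j : ℕ} (hj : 3 ≤ j) {n : ℤ} (hn : 0 ≤ n) :
    (sigma3 H j).coeff n = H j n := by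
  rw [coeff_sigma3 H hj, if_neg (by omega), if_neg (by omega), if_neg (by omega)]

theorem coeff_sigma3_of_neg (H : ℕ → ℤ → ℂ) {j : ℕ} (hj : 3 ≤ j) {n : ℤ} (hn : n < 0)
    (hnj : n ≠ -j) (hn2 : n ≠ -2) : (sigma3 H j).coeff n = 0 := by
  rw [coeff_sigma3 H hj, if_neg hnj, if_neg hn2, if_pos hn]

theorem sigma3_mem_span (H : ℕ → ℤ → ℂ) {j : ℕ} (hj : 3 ≤ j) :
    sigma3 H j ∈ Submodule.span ℂ (sigma3Set H) :=
  Submodule.subset_span ⟨j, hj, rfl⟩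

theorem eq_zero_of_mem_span_sigma3Set {H : ℕ → ℤ → ℂ} {x : LaurentSeries ℂ}
    (hx : x ∈ Submodule.span ℂ (sigma3Set H)) (h : ∀ k : ℕ, 3 ≤ k → x.coeff (-k) = 0) : x = 0 :=
  eq_zero_of_mem_span_of_biorthogonal (sigma3 H)
    (fun k => HahnSeries.coeff.linearMap (-(k : ℤ))) (S := {j | 3 ≤ j})
    (fun k hk => coeff_sigma3_neg_self H hk)
    (fun i (hi : 3 ≤ i) k (hk : 3 ≤ k) hik =>
      coeff_sigma3_of_neg H hi (by omega) (by omega) (by omega))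
    hx h

theorem coeff_neg_one_eq_zero_of_mem_span {H : ℕ → ℤ → ℂ} {x : LaurentSeries ℂ}
    (hx : x ∈ Submodule.span ℂ (sigma3Set H)) : x.coeff (-1) = 0 := by
  refine (Submodule.span_le.2 ?_ hx : x ∈ LinearMap.ker (HahnSeries.coeff.linearMap (-1)))
  rintro _ ⟨j, hj : 3 ≤ j, rfl⟩
  exact coeff_sigma3_of_neg H hj (by norm_num) (by omega) (by norm_num)

theorem zp_two_mul_sigma3_of_mem_span {H : ℕ → ℤ → ℂ} {j : ℕ} (hj : 3 ≤ j)
    (hmem : zp 2 * sigma3 H j ∈ Submodule.span ℂ (sigma3Set H)) :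
    zp 2 * sigma3 H j = sigma3 H (j + 2) + H j (-2) • sigma3 H 4 := by
  rw [← sub_eq_zero]
  refine eq_zero_of_mem_span_sigma3Set (Submodule.sub_mem _ hmem (Submodule.add_mem _
    (sigma3_mem_span H (by omega)) (Submodule.smul_mem _ _ (sigma3_mem_span H (by norm_num)))))
    fun k hk => ?_
  simp only [HahnSeries.coeff_sub, HahnSeries.coeff_add, HahnSeries.coeff_smul, coeff_zp_mul,
    coeff_sigma3 H hj, coeff_sigma3 H (show 3 ≤ j + 2 by omega),
    coeff_sigma3 H (show 3 ≤ 4 by norm_num)]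
  split_ifs <;> first | omega | simp

theorem coeff_sigma3_add_two_of_mem_span {H : ℕ → ℤ → ℂ} {j : ℕ} (hj : 3 ≤ j)
    (hmem : zp 2 * sigma3 H j ∈ Submodule.span ℂ (sigma3Set H)) (n : ℤ) :
    (sigma3 H j).coeff (n + 2) = (sigma3 H (j + 2)).coeff n + H j (-2) * (sigma3 H 4).coeff n := by
  simpa [coeff_zp_mul] using congrArg (HahnSeries.coeff · n) (zp_two_mul_sigma3_of_mem_span hj hmem)

theorem coeff_neg_one_sigma3_mul (H : ℕ → ℤ → ℂ) {i j : ℕ} (hi : 3 ≤ i) (hj : 3 ≤ j) :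
    (sigma3 H i * sigma3 H j).coeff (-1) =
      H j (i - 1) + H i (j - 1) + H i (-2) * H j 1 + H j (-2) * H i 1 := by
  set S : ℕ → LaurentSeries ℂ :=
    fun k => HahnSeries.ofPowerSeries ℤ ℂ (PowerSeries.mk fun n => H k n)
  have hS (k : ℕ) : sigma3 H k = zp k + H k (-2) • zp 2 + S k := rfl
  have hS_coeff (k : ℕ) {n : ℤ} (hn : 0 ≤ n) : (S k).coeff n = H k n := by
    simp [S, PowerSeries.coeff_coe, not_lt.2 hn, abs_of_nonneg hn]
  have hSS : (S i * S j).coeff (-1) = 0 := by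
    rw [← map_mul, PowerSeries.coeff_coe, if_pos (by norm_num)]
  have hSj : (S i * sigma3 H j).coeff (-1) = H i (j - 1) + H j (-2) * H i 1 := by
    rw [hS j, mul_add, mul_add, mul_smul_comm, mul_comm (S i), mul_comm (S i),
      HahnSeries.coeff_add, HahnSeries.coeff_add, hSS, HahnSeries.coeff_smul, coeff_zp_mul,
      coeff_zp_mul, hS_coeff i (by omega), hS_coeff i (by norm_num)]
    norm_num [neg_add_eq_sub]
  rw [hS i, add_mul, add_mul, smul_mul_assoc, HahnSeries.coeff_add, HahnSeries.coeff_add,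
    HahnSeries.coeff_smul, coeff_zp_mul, coeff_zp_mul, hSj, coeff_sigma3_of_nonneg H hj (by omega),
    coeff_sigma3_of_nonneg H hj (by norm_num)]
  norm_num [neg_add_eq_sub]
  ring

theorem sigma3_eq_of_tail_eq_zero {H : ℕ → ℤ → ℂ}
    (htail : ∀ j k : ℕ, 3 ≤ j → 1 ≤ k → H j k = 0) {j : ℕ} (hj : 3 ≤ j) :
    sigma3 H j = zp j + H j (-2) • zp 2 + H j 0 • zp 0 := by
  rw [sigma3]
  congr 1
  ext n
  rw [PowerSeries.coeff_coe, HahnSeries.coeff_smul, coeff_zp, PowerSeries.coeff_mk]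
  rcases lt_trichotomy n 0 with hn | rfl | hn
  · simp [hn, hn.ne]
  · simp
  · lift n to ℕ using hn.le
    simp [htail j n hj (by omega), Nat.pos_iff_ne_zero.1 (by exact_mod_cast hn)]

theorem zp_two_mul_sigma3_of_recurrence {H : ℕ → ℤ → ℂ}
    (htail : ∀ j k : ℕ, 3 ≤ j → 1 ≤ k → H j k = 0)
    (hrec : ∀ j : ℕ, 5 ≤ j →
      H j (-2) + H (j - 2) (-2) * H 4 (-2) - H (j - 2) 0 = 0 ∧
      H j 0 + H (j - 2) (-2) * H 4 0 = 0)
    {j : ℕ} (hj : 3 ≤ j) :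
    zp 2 * sigma3 H j = sigma3 H (j + 2) + H j (-2) • sigma3 H 4 := by
  obtain ⟨hA, hB⟩ := hrec (j + 2) (by omega)
  rw [Nat.add_sub_cancel] at hA hB
  rw [sigma3_eq_of_tail_eq_zero htail hj, sigma3_eq_of_tail_eq_zero htail (by omega : 3 ≤ j + 2),
    sigma3_eq_of_tail_eq_zero htail (by norm_num : 3 ≤ 4)]
  simp only [mul_add, mul_smul_comm, zp_mul_zp]
  push_cast
  rw [add_comm 2 (j : ℤ)]
  linear_combination (norm := module) (-hA) • zp 2 - hB • zp 0

theorem sigma3_four_eq {H : ℕ → ℤ → ℂ} (htail : ∀ j k : ℕ, 3 ≤ j → 1 ≤ k → H j k = 0) :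
    sigma3 H 4 = zp 2 * zp 2 + H 4 (-2) • zp 2 + H 4 0 • 1 := by
  rw [sigma3_eq_of_tail_eq_zero htail (by norm_num), zp_mul_zp, zp_zero]
  norm_num

theorem sigma3_three_mul_self_defect {H : ℕ → ℤ → ℂ}
    (htail : ∀ j k : ℕ, 3 ≤ j → 1 ≤ k → H j k = 0) :
    sigma3 H 6 + (2 * H 3 (-2)) • sigma3 H 5 + H 3 (-2) ^ 2 • sigma3 H 4
        + (2 * H 3 0) • sigma3 H 3 - sigma3 H 3 * sigma3 H 3 =
      (H 6 (-2) + 2 * H 3 (-2) * H 5 (-2) + H 3 (-2) ^ 2 * H 4 (-2)) • zp 2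
        + (H 6 0 + 2 * H 3 (-2) * H 5 0 + H 3 (-2) ^ 2 * H 4 0 + H 3 0 ^ 2) • zp 0 := by
  simp only [sigma3_eq_of_tail_eq_zero htail (by norm_num : 3 ≤ 3),
    sigma3_eq_of_tail_eq_zero htail (by norm_num : 3 ≤ 4),
    sigma3_eq_of_tail_eq_zero htail (by norm_num : 3 ≤ 5),
    sigma3_eq_of_tail_eq_zero htail (by norm_num : 3 ≤ 6),
    mul_add, add_mul, mul_smul_comm, smul_mul_assoc, zp_mul_zp]
  norm_num
  module

theorem smul_zp_two_add_smul_zp_zero_mem_span_iff {H : ℕ → ℤ → ℂ} {α β : ℂ} :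
    α • zp 2 + β • zp 0 ∈ Submodule.span ℂ (sigma3Set H) ↔ α = 0 ∧ β = 0 := by
  refine ⟨fun h => ?_, fun ⟨hα, hβ⟩ => ?_⟩
  · have h0 := eq_zero_of_mem_span_sigma3Set h fun k hk => by
      simp only [HahnSeries.coeff_add, HahnSeries.coeff_smul, coeff_zp]
      rw [if_neg (by omega), if_neg (by omega), smul_zero, smul_zero, add_zero]
    exact ⟨by simpa [coeff_zp] using congrArg (HahnSeries.coeff · (-2)) h0,
      by simpa [coeff_zp] using congrArg (HahnSeries.coeff · 0) h0⟩
  · rw [hα, hβ, zero_smul ℂ (zp 2), zero_smul ℂ (zp 0), add_zero]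
    exact Submodule.zero_mem _

theorem sigma3_three_mul_self_mem_span_iff {H : ℕ → ℤ → ℂ}
    (htail : ∀ j k : ℕ, 3 ≤ j → 1 ≤ k → H j k = 0) :
    sigma3 H 3 * sigma3 H 3 ∈ Submodule.span ℂ (sigma3Set H) ↔
      H 6 (-2) + 2 * H 3 (-2) * H 5 (-2) + H 3 (-2) ^ 2 * H 4 (-2) = 0 ∧
      H 6 0 + 2 * H 3 (-2) * H 5 0 + H 3 (-2) ^ 2 * H 4 0 + H 3 0 ^ 2 = 0 := by
  have hV (j : ℕ) (hj : 3 ≤ j) := sigma3_mem_span H hj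
  have hcomb : sigma3 H 6 + (2 * H 3 (-2)) • sigma3 H 5 + H 3 (-2) ^ 2 • sigma3 H 4
      + (2 * H 3 0) • sigma3 H 3 ∈ Submodule.span ℂ (sigma3Set H) :=
    add_mem (add_mem (add_mem (hV 6 (by norm_num)) (Submodule.smul_mem _ _ (hV 5 (by norm_num))))
      (Submodule.smul_mem _ _ (hV 4 (by norm_num)))) (Submodule.smul_mem _ _ (hV 3 le_rfl))
  rw [← Submodule.sub_mem_iff_right _ hcomb, sigma3_three_mul_self_defect htail,
    smul_zp_two_add_smul_zp_zero_mem_span_iff]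

theorem sigma3_tail_eq_zero_of_closed {H : ℕ → ℤ → ℂ}
    (hmul : ∀ x ∈ sigma3Set H, ∀ y ∈ sigma3Set H, x * y ∈ Submodule.span ℂ (sigma3Set H))
    (hz2 : ∀ x ∈ sigma3Set H, zp 2 * x ∈ Submodule.span ℂ (sigma3Set H)) :
    ∀ j k : ℕ, 3 ≤ j → 1 ≤ k → H j k = 0 := by
  have hcoeff (j : ℕ) (hj : 3 ≤ j) :=
    coeff_sigma3_add_two_of_mem_span hj (hz2 _ ⟨j, hj, rfl⟩)
  have h_one (j : ℕ) (hj : 3 ≤ j) : H j 1 = 0 := by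
    have h := hcoeff j hj (-1)
    rwa [coeff_sigma3_of_nonneg H hj (by norm_num),
      coeff_sigma3_of_neg H (show 3 ≤ j + 2 by omega) (by norm_num) (by omega) (by norm_num),
      coeff_sigma3_of_neg H (show 3 ≤ 4 by norm_num) (by norm_num) (by omega) (by norm_num),
      mul_zero, add_zero] at h
  have h_shift (j : ℕ) (hj : 3 ≤ j) (m : ℕ) (hm : 1 ≤ m) :
      H j (m + 2 : ℕ) = H (j + 2) m + H j (-2) * H 4 m := by
    have h := hcoeff j hj m
    rwa [coeff_sigma3_of_nonneg H hj (by omega), coeff_sigma3_of_nonneg H (by omega) (by omega),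
      coeff_sigma3_of_nonneg H (by norm_num) (by omega)] at h
  have h_antisymm (i : ℕ) (hi : 3 ≤ i) (j : ℕ) (hj : 3 ≤ j) :
      H j (i - 1 : ℕ) + H i (j - 1 : ℕ) = 0 := by
    have h := coeff_neg_one_eq_zero_of_mem_span (hmul _ ⟨i, hi, rfl⟩ _ ⟨j, hj, rfl⟩)
    rw [coeff_neg_one_sigma3_mul H hi hj, h_one i hi, h_one j hj] at h
    simpa [Nat.cast_sub (by omega : 1 ≤ i), Nat.cast_sub (by omega : 1 ≤ j)] using h
  exact fun j k hj hk => tail_eq_zero_of_shift_of_antisymm (fun j k => H j k) (fun j => H j (-2))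
    (fun j hj => by exact_mod_cast h_one j hj) h_shift h_antisymm j hj k hk

theorem sigma3_recurrence_of_closed {H : ℕ → ℤ → ℂ}
    (hz2 : ∀ x ∈ sigma3Set H, zp 2 * x ∈ Submodule.span ℂ (sigma3Set H))
    (htail : ∀ j k : ℕ, 3 ≤ j → 1 ≤ k → H j k = 0) :
    ∀ j : ℕ, 5 ≤ j →
      H j (-2) + H (j - 2) (-2) * H 4 (-2) - H (j - 2) 0 = 0 ∧
      H j 0 + H (j - 2) (-2) * H 4 0 = 0 := by
  intro j hj
  obtain ⟨m, rfl⟩ : ∃ m, j = m + 2 := ⟨j - 2, by omega⟩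
  have hm : 3 ≤ m := by omega
  have hcoeff := coeff_sigma3_add_two_of_mem_span hm (hz2 _ ⟨m, hm, rfl⟩)
  have h_neg_two := hcoeff (-2)
  have h_zero := hcoeff 0
  rw [neg_add_cancel, coeff_sigma3_of_nonneg H hm le_rfl, coeff_sigma3_neg_two H (by omega),
    coeff_sigma3_neg_two H (by norm_num)] at h_neg_two
  rw [zero_add, coeff_sigma3_of_nonneg H hm (by norm_num),
    coeff_sigma3_of_nonneg H (by omega) le_rfl, coeff_sigma3_of_nonneg H (by norm_num) le_rfl]
    at h_zero
  have h_two : H m 2 = 0 := by exact_mod_cast htail m 2 hm (by norm_num)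
  rw [Nat.add_sub_cancel]
  exact ⟨by linear_combination -h_neg_two, by linear_combination h_two - h_zero⟩

theorem sigma3_constraints_of_closed {H : ℕ → ℤ → ℂ}
    (hmul : ∀ x ∈ sigma3Set H, ∀ y ∈ sigma3Set H, x * y ∈ Submodule.span ℂ (sigma3Set H))
    (htail : ∀ j k : ℕ, 3 ≤ j → 1 ≤ k → H j k = 0)
    (hrec : ∀ j : ℕ, 5 ≤ j →
      H j (-2) + H (j - 2) (-2) * H 4 (-2) - H (j - 2) 0 = 0 ∧
      H j 0 + H (j - 2) (-2) * H 4 0 = 0) :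
    (H 4 0 + 2 * H 3 0 * H 3 (-2) - (H 3 (-2))^2 * H 4 (-2) - (H 4 (-2))^2 = 0) ∧
    ((H 3 0)^2 - (H 3 (-2))^2 * H 4 0 - H 4 (-2) * H 4 0 = 0) := by
  obtain ⟨hα, hβ⟩ :=
    (sigma3_three_mul_self_mem_span_iff htail).1 (hmul _ ⟨3, le_refl 3, rfl⟩ _ ⟨3, le_refl 3, rfl⟩)
  obtain ⟨hA5, hB5⟩ := hrec 5 (by norm_num)
  obtain ⟨hA6, hB6⟩ := hrec 6 (by norm_num)
  norm_num at hA5 hB5 hA6 hB6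
  exact ⟨by linear_combination hα - hA6 - 2 * H 3 (-2) * hA5,
    by linear_combination hβ - hB6 - 2 * H 3 (-2) * hB5⟩

theorem sigma3_closed_of_recurrence {H : ℕ → ℤ → ℂ}
    (htail : ∀ j k : ℕ, 3 ≤ j → 1 ≤ k → H j k = 0)
    (hrec : ∀ j : ℕ, 5 ≤ j →
      H j (-2) + H (j - 2) (-2) * H 4 (-2) - H (j - 2) 0 = 0 ∧
      H j 0 + H (j - 2) (-2) * H 4 0 = 0)
    (hC₁ : H 4 0 + 2 * H 3 0 * H 3 (-2) - (H 3 (-2))^2 * H 4 (-2) - (H 4 (-2))^2 = 0)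
    (hC₂ : (H 3 0)^2 - (H 3 (-2))^2 * H 4 0 - H 4 (-2) * H 4 0 = 0) :
    (∀ x ∈ sigma3Set H, ∀ y ∈ sigma3Set H, x * y ∈ Submodule.span ℂ (sigma3Set H)) ∧
    (∀ x ∈ sigma3Set H, zp 2 * x ∈ Submodule.span ℂ (sigma3Set H)) := by
  set V := Submodule.span ℂ (sigma3Set H)
  have hV (j : ℕ) (hj : 3 ≤ j) : sigma3 H j ∈ V := sigma3_mem_span H hj
  have hz (j : ℕ) (hj : 3 ≤ j) := zp_two_mul_sigma3_of_recurrence htail hrec hj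
  have hzV : ∀ v ∈ V, zp 2 * v ∈ V := mul_mem_span_of_forall_mul_mem <| by
    rintro _ ⟨j, hj : 3 ≤ j, rfl⟩
    rw [hz j hj]
    exact add_mem (hV _ (by omega)) (V.smul_mem _ (hV 4 (by norm_num)))
  have h4V (v : LaurentSeries ℂ) (hv : v ∈ V) : sigma3 H 4 * v ∈ V := by
    rw [sigma3_four_eq htail, add_mul, add_mul, mul_assoc, smul_mul_assoc, smul_mul_assoc, one_mul]
    exact add_mem (add_mem (hzV _ (hzV _ hv)) (V.smul_mem _ (hzV _ hv))) (V.smul_mem _ hv)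
  have h33 : sigma3 H 3 * sigma3 H 3 ∈ V := by
    obtain ⟨hA5, hB5⟩ := hrec 5 (by norm_num)
    obtain ⟨hA6, hB6⟩ := hrec 6 (by norm_num)
    norm_num at hA5 hB5 hA6 hB6
    exact (sigma3_three_mul_self_mem_span_iff htail).2
      ⟨by linear_combination hC₁ + hA6 + 2 * H 3 (-2) * hA5,
        by linear_combination hC₂ + hB6 + 2 * H 3 (-2) * hB5⟩
  have hstep (i : ℕ) (hi : 3 ≤ i) :
      sigma3 H (i + 2) = zp 2 * sigma3 H i - H i (-2) • sigma3 H 4 :=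
    eq_sub_of_add_eq (hz i hi).symm
  have h3V (j : ℕ) (hj : 3 ≤ j) : sigma3 H j * sigma3 H 3 ∈ V :=
    mul_mem_of_recurrence hzV hstep (h4V _ (hV 3 le_rfl)) h33 (h4V _ (hV 3 le_rfl)) j hj
  refine ⟨?_, fun x hx => hzV x (Submodule.subset_span hx)⟩
  rintro _ ⟨i, hi, rfl⟩ _ ⟨j, hj, rfl⟩
  exact mul_mem_of_recurrence hzV hstep (h4V _ (hV j hj)) (mul_comm (sigma3 H j) _ ▸ h3V j hj)
    (h4V _ (hV j hj)) i hi

theorem sigma3_closed_iff (H : ℕ → ℤ → ℂ) :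
    ((∀ x ∈ sigma3Set H, ∀ y ∈ sigma3Set H, x * y ∈ Submodule.span ℂ (sigma3Set H)) ∧
     (∀ x ∈ sigma3Set H, zp 2 * x ∈ Submodule.span ℂ (sigma3Set H)))
    ↔
    ((∀ j k : ℕ, 3 ≤ j → 1 ≤ k → H j (k:ℤ) = 0) ∧
     (∀ j : ℕ, 5 ≤ j →
        H j (-2) + H (j-2) (-2) * H 4 (-2) - H (j-2) 0 = 0 ∧
        H j 0 + H (j-2) (-2) * H 4 0 = 0) ∧
     (H 4 0 + 2 * H 3 0 * H 3 (-2) - (H 3 (-2))^2 * H 4 (-2) - (H 4 (-2))^2 = 0) ∧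
     ((H 3 0)^2 - (H 3 (-2))^2 * H 4 0 - H 4 (-2) * H 4 0 = 0)) := by
  constructor
  · rintro ⟨hmul, hz2⟩
    have htail := sigma3_tail_eq_zero_of_closed hmul hz2
    have hrec := sigma3_recurrence_of_closed hz2 htail
    exact ⟨htail, hrec, sigma3_constraints_of_closed hmul htail hrec⟩
  · rintro ⟨htail, hrec, hC₁, hC₂⟩
    exact sigma3_closed_of_recurrence htail hrec hC₁ hC₂

end
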